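/- Let A be a rank-ℓ arrangement of n ≥ 2 hyperplanes, and suppose the bigraded Hilbert polynomial of S/I(A) is given by the Hirzebruch–Riemann–Roch expression with ch(O_X) = χ̂(A, −h, k−h) + (higher order terms). Then the top-degree part (total degree n−2) of the Hilbert polynomial p_{S/I}(p, q) equals (1/(n−2)!) Σ_{i=1}^{ℓ} t_{i0} C(n−2, i−1) p^{i−1} q^{n−1−i}, where t_{i0} are Tutte polynomial coefficients; in particular this top-degree part is determined by the underlying matroid. Purely algebraically: the coefficient extraction [h^{ℓ−1} k^{n−1}] of χ̂(A, −h, k−h)·(ph+qk)^{n−2}/(n−2)! in ℤ[h,k]/(h^ℓ, k^n) equals (1/(n−2)!) Σ_{i=1}^{ℓ} t_{i0} C(n−2, i−1) p^{i−1} q^{n−1−i}. -/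

import Mathlib

/- STATEMENT 13: for a central essential rank-ℓ arrangement A of n ≥ 2
hyperplanes, the purely algebraic form of the leading term of the Hilbert
polynomial: the coefficient of h^{ℓ−1} k^{n−1} in
χ̂(A, −h, k−h)·(p·h + q·k)^{n−2}/(n−2)! equals
(1/(n−2)!) Σ_{i=1}^{ℓ} t_{i0} C(n−2, i−1) p^{i−1} q^{n−1−i}, where t_{i0} are
the Tutte coefficients.  Here `h = X 0`, `k = X 1` in `ℚ[h,k]`. -/

open MvPolynomial

variable {V : Type*} [AddCommGroup V] [Module ℂ V] [FiniteDimensional ℂ V]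

/-- rank of a set of subspaces: codimension of its intersection. -/
noncomputable def rk (S : Finset (Submodule ℂ V)) : ℕ :=
  Module.finrank ℂ V - Module.finrank ℂ (S.inf id : Submodule ℂ V)

/-- Tutte polynomial of the arrangement, `x = X 0`, `y = X 1`. -/
noncomputable def tutteA (A : Finset (Submodule ℂ V)) : MvPolynomial (Fin 2) ℤ :=
  ∑ S ∈ A.powerset, (X 0 - 1) ^ (rk A - rk S) * (X 1 - 1) ^ (S.card - rk S)

/-- `χ̂(A, −h, k−h) = Σ_S (−1)^{|S|} (−h)^{r(S)} (k−h)^{ℓ−r(S)}` over ℚ. -/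
noncomputable def chihatSub (A : Finset (Submodule ℂ V)) : MvPolynomial (Fin 2) ℚ :=
  ∑ S ∈ A.powerset, C ((-1 : ℚ) ^ S.card) *
    (-(X 0)) ^ (rk S) * (X 1 - X 0) ^ (rk A - rk S)

/-! For every subset `S` of `A`, the term `(-1)^|S| (-h)^r(S) (k-h)^(ℓ-r(S))` of
`χ̂(A, -h, k-h)` is the homogenization of the `y = 0` part `(x-1)^(ℓ-r(S)) (-1)^(|S|-r(S))`
of the Tutte term of `S` (the signs agree because `r(S) ≤ |S|` for a set of hyperplanes). Hence
`χ̂(A, -h, k-h) = Σ_i t_{i0} h^(ℓ-i) k^i`, and in the product with `(ph + qk)^(n-2)` the monomial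
`h^(ℓ-i) k^i` reaches `h^(ℓ-1) k^(n-1)` only through the binomial term `h^(i-1) k^(n-1-i)`. -/

open Finset

namespace MvPolynomial

lemma single_zero_add_single_one_inj {a b a' b' : ℕ} :
    Finsupp.single (0 : Fin 2) a + Finsupp.single 1 b =
        Finsupp.single 0 a' + Finsupp.single 1 b' ↔ a = a' ∧ b = b' := by
  refine ⟨fun h => ⟨?_, ?_⟩, fun ⟨ha, hb⟩ => ha ▸ hb ▸ rfl⟩
  · simpa using DFunLike.congr_fun h 0
  · simpa using DFunLike.congr_fun h 1

lemma coeff_C_mul_X_zero_pow_mul_X_one_pow {R : Type*} [CommSemiring R] (c : R) (u v a b : ℕ) :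
    coeff (Finsupp.single 0 a + Finsupp.single 1 b) (C c * X (0 : Fin 2) ^ u * X 1 ^ v) =
      if u = a ∧ v = b then c else 0 := by
  rw [mul_assoc, X_pow_eq_monomial, X_pow_eq_monomial, monomial_mul, one_mul, C_mul_monomial,
    mul_one, coeff_monomial]
  exact if_congr single_zero_add_single_one_inj rfl rfl

section CommSemiring

variable {R : Type*} [CommSemiring R]

lemma C_mul_X_zero_add_C_mul_X_one_pow (p q : R) (m : ℕ) :
    (C p * X 0 + C q * X 1 : MvPolynomial (Fin 2) R) ^ m =
      ∑ j ∈ range (m + 1), C (p ^ j * q ^ (m - j) * m.choose j) * X 0 ^ j * X 1 ^ (m - j) := by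
  rw [add_pow]
  refine sum_congr rfl fun j _ => ?_
  simp only [map_mul, map_pow, map_natCast]
  ring

lemma coeff_sum_mul_C_mul_X_zero_add_C_mul_X_one_pow (t : ℕ → R) (p q : R) (ℓ : ℕ) {n : ℕ}
    (hn : 2 ≤ n) :
    coeff (Finsupp.single 0 (ℓ - 1) + Finsupp.single 1 (n - 1))
        ((∑ i ∈ range (ℓ + 1), C (t i) * X (0 : Fin 2) ^ (ℓ - i) * X 1 ^ i) *
          (C p * X 0 + C q * X 1) ^ (n - 2)) =
      ∑ i ∈ Icc 1 ℓ, t i * (n - 2).choose (i - 1) * p ^ (i - 1) * q ^ (n - 1 - i) := by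
  set m := n - 2
  have hterm : ∀ i ∈ range (ℓ + 1), ∀ j ∈ range (m + 1),
      coeff (Finsupp.single (0 : Fin 2) (ℓ - 1) + Finsupp.single 1 (n - 1))
        (C (t i) * X 0 ^ (ℓ - i) * X 1 ^ i * (C (p ^ j * q ^ (m - j) * m.choose j) * X 0 ^ j *
          X 1 ^ (m - j))) =
      if 1 ≤ i then if j = i - 1 then t i * (p ^ j * q ^ (m - j) * m.choose j) else 0 else 0 := by
    intro i hi j hj
    rw [mem_range] at hi hj
    rw [show C (t i) * X (0 : Fin 2) ^ (ℓ - i) * X 1 ^ i *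
          (C (p ^ j * q ^ (m - j) * m.choose j) * X 0 ^ j * X 1 ^ (m - j)) =
        C (t i * (p ^ j * q ^ (m - j) * m.choose j)) * X 0 ^ (ℓ - i + j) * X 1 ^ (i + (m - j)) by
          simp only [map_mul, pow_add]; ring,
      coeff_C_mul_X_zero_pow_mul_X_one_pow, ← ite_and]
    exact if_congr (by omega) rfl rfl
  rw [C_mul_X_zero_add_C_mul_X_one_pow, sum_mul_sum]
  simp only [coeff_sum]
  rw [sum_congr rfl fun i hi => sum_congr rfl (hterm i hi)]
  simp only [sum_ite_irrel, sum_ite_eq', sum_const_zero]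
  rw [← sum_filter, show {i ∈ range (ℓ + 1) | 1 ≤ i} = Icc 1 ℓ by ext; simp; omega]
  refine sum_congr rfl fun i hi => ?_
  rw [mem_Icc] at hi
  split_ifs with hm <;> rw [mem_range] at hm
  · rw [show m - (i - 1) = n - 1 - i by omega]
    ring
  · rw [Nat.choose_eq_zero_of_lt (by omega : m < i - 1)]
    simp

end CommSemiring

section CommRing

variable {R : Type*} [CommRing R]

lemma coeff_single_zero_X_sub_one_pow_mul_X_sub_one_pow (e d i : ℕ) :
    coeff (Finsupp.single 0 i) ((X 0 - 1) ^ e * (X 1 - 1) ^ d : MvPolynomial (Fin 2) R) =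
      (-1) ^ (i + e + d) * e.choose i := by
  have hexpand : ((X 0 - 1) ^ e * (X 1 - 1) ^ d : MvPolynomial (Fin 2) R) =
      ∑ a ∈ range (e + 1), ∑ b ∈ range (d + 1),
        C ((-1 : R) ^ (a + e) * (-1) ^ (b + d) * e.choose a * d.choose b) * X 0 ^ a * X 1 ^ b := by
    rw [sub_pow, sub_pow, sum_mul_sum]
    refine sum_congr rfl fun a _ => sum_congr rfl fun b _ => ?_
    simp only [map_mul, map_pow, map_neg, map_one, map_natCast, one_pow]
    ring
  rw [hexpand, ← add_zero (Finsupp.single 0 i), ← Finsupp.single_zero (1 : Fin 2)]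
  simp only [coeff_sum, coeff_C_mul_X_zero_pow_mul_X_one_pow, ite_and, sum_ite_irrel, sum_ite_eq',
    sum_const_zero, mem_range, Nat.zero_lt_succ, if_true, Nat.choose_zero_right]
  split_ifs with hi
  · ring
  · rw [Nat.choose_eq_zero_of_lt (by omega : e < i), Nat.cast_zero, mul_zero]

lemma C_neg_one_pow_mul_neg_X_pow_mul_X_sub_X_pow {r ℓ c : ℕ} (hrℓ : r ≤ ℓ) (hrc : r ≤ c) :
    (C ((-1) ^ c) * (-X 0) ^ r * (X 1 - X 0) ^ (ℓ - r) : MvPolynomial (Fin 2) R) =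
      ∑ i ∈ range (ℓ + 1),
        C ((coeff (Finsupp.single (0 : Fin 2) i)
            ((X 0 - 1) ^ (ℓ - r) * (X 1 - 1) ^ (c - r)) : ℤ) : R) * X 0 ^ (ℓ - i) * X 1 ^ i := by
  have hsign : (-1 : MvPolynomial (Fin 2) R) ^ c * (-1) ^ r = (-1) ^ (c - r) := by
    rw [← pow_add, show c + r = c - r + 2 * r by omega, pow_add, pow_mul, neg_one_sq, one_pow,
      mul_one]
  simp only [coeff_single_zero_X_sub_one_pow_mul_X_sub_one_pow, Int.cast_mul, Int.cast_pow,
    Int.cast_neg, Int.cast_one, Int.cast_natCast]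
  rw [sub_pow, mul_sum, ← sum_subset (range_subset_range.2 (by omega : ℓ - r + 1 ≤ ℓ + 1))]
  · refine sum_congr rfl fun i hi => ?_
    rw [mem_range] at hi
    rw [neg_pow, show ℓ - i = r + (ℓ - r - i) by omega]
    simp only [map_mul, map_pow, map_neg, map_one, map_natCast, pow_add]
    linear_combination (X 0 ^ r * X 0 ^ (ℓ - r - i) * X 1 ^ i *
      ((ℓ - r).choose i : MvPolynomial (Fin 2) R) * (-1) ^ i * (-1) ^ (ℓ - r)) * hsign
  · intro i _ hi
    rw [mem_range, not_lt] at hi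
    rw [Nat.choose_eq_zero_of_lt (by omega : ℓ - r < i)]
    simp

end CommRing

end MvPolynomial

lemma rk_mono {S T : Finset (Submodule ℂ V)} (h : S ⊆ T) : rk S ≤ rk T :=
  Nat.sub_le_sub_left (Submodule.finrank_mono (Finset.inf_mono h)) _

lemma rk_insert_le {H : Submodule ℂ V} (hH : Module.finrank ℂ H + 1 = Module.finrank ℂ V)
    (S : Finset (Submodule ℂ V)) : rk (insert H S) ≤ rk S + 1 := by
  have hsum := Submodule.finrank_sup_add_finrank_inf_eq H (S.inf id)
  have hsup := Submodule.finrank_le (H ⊔ S.inf id)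
  have hinf := Submodule.finrank_le (S.inf id)
  rw [rk, rk, inf_insert, id]
  omega

lemma rk_le_card {S : Finset (Submodule ℂ V)}
    (hS : ∀ H ∈ S, Module.finrank ℂ H + 1 = Module.finrank ℂ V) : rk S ≤ S.card := by
  classical
  induction S using Finset.induction_on with
  | empty => rw [rk, Finset.inf_empty, finrank_top, Nat.sub_self]; exact Nat.zero_le _
  | insert H S hHS ih =>
    rw [card_insert_of_notMem hHS]
    exact (rk_insert_le (hS H (mem_insert_self H S)) S).trans
      (Nat.add_le_add_right (ih fun K hK => hS K (mem_insert_of_mem hK)) 1)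

lemma chihatSub_eq_sum_coeff_tutteA (A : Finset (Submodule ℂ V))
    (hA : ∀ H ∈ A, Module.finrank ℂ H + 1 = Module.finrank ℂ V) :
    chihatSub A = ∑ i ∈ range (rk A + 1),
      C ((coeff (Finsupp.single 0 i) (tutteA A) : ℤ) : ℚ) * X 0 ^ (rk A - i) * X 1 ^ i := by
  simp only [chihatSub, tutteA, coeff_sum, Int.cast_sum, map_sum, sum_mul]
  rw [sum_comm]
  refine sum_congr rfl fun S hS => ?_
  rw [mem_powerset] at hS
  exact C_neg_one_pow_mul_neg_X_pow_mul_X_sub_X_pow (rk_mono hS)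
    (rk_le_card fun H hH => hA H (hS hH))

theorem hilbert_leading_term_general (A : Finset (Submodule ℂ V))
    (hA : ∀ H ∈ A, Module.finrank ℂ H + 1 = Module.finrank ℂ V)
    (hn : 2 ≤ A.card) (p q : ℚ) :
    (MvPolynomial.coeff (Finsupp.single 0 (rk A - 1) + Finsupp.single 1 (A.card - 1))
        (chihatSub A * (C p * X 0 + C q * X 1) ^ (A.card - 2))) *
        ((Nat.factorial (A.card - 2) : ℚ))⁻¹ =
      ((Nat.factorial (A.card - 2) : ℚ))⁻¹ *
        ∑ i ∈ Finset.Icc 1 (rk A),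
          ((MvPolynomial.coeff (Finsupp.single 0 i) (tutteA A) : ℤ) : ℚ) *
            ((A.card - 2).choose (i - 1)) * p ^ (i - 1) * q ^ (A.card - 1 - i) := by
  rw [chihatSub_eq_sum_coeff_tutteA A hA,
    coeff_sum_mul_C_mul_X_zero_add_C_mul_X_one_pow _ p q _ hn, mul_comm]

/-- Leading term of the Hilbert polynomial of `S/I(A)` is combinatorial:
`[h^{ℓ−1}k^{n−1}] χ̂(A,−h,k−h)(ph+qk)^{n−2}/(n−2)!
  = (1/(n−2)!) Σ_{i=1}^ℓ t_{i0} C(n−2,i−1) p^{i−1} q^{n−1−i}`. -/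
theorem hilbert_leading_term (A : Finset (Submodule ℂ V))
    (hA : ∀ H ∈ A, Module.finrank ℂ H + 1 = Module.finrank ℂ V)
    (hess : rk A = Module.finrank ℂ V) (hn : 2 ≤ A.card) (p q : ℚ) :
    (MvPolynomial.coeff (Finsupp.single 0 (rk A - 1) + Finsupp.single 1 (A.card - 1))
        (chihatSub A * (C p * X 0 + C q * X 1) ^ (A.card - 2))) *
        ((Nat.factorial (A.card - 2) : ℚ))⁻¹ =
      ((Nat.factorial (A.card - 2) : ℚ))⁻¹ *
        ∑ i ∈ Finset.Icc 1 (rk A),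
          ((MvPolynomial.coeff (Finsupp.single 0 i) (tutteA A) : ℤ) : ℚ) *
            ((A.card - 2).choose (i - 1)) * p ^ (i - 1) * q ^ (A.card - 1 - i) :=
  hilbert_leading_term_general A hA hn p q
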